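/- arXiv:math/0604492 — 4 statements merged into one kernel-verified Lean document; each statement's English description precedes it below -/
import Mathlib

section
/- Let G be a discrete finitely generated group and for j = 1, 2 let (H^j_i)_{i≥0} be decreasing sequences of finite-index subgroups of G, with associated subodometers ←G_j = lim_{←i}(G/H^j_i, π_i). Let e_j ∈ ←G_j denote the sequence whose i-th coordinate is the coset of the identity element e of G in G/H^j_i. Then there exists a factor map π : ←G_1 → ←G_2 with π(e_1) = e_2 if and only if for every i ≥ 0 there exists k ≥ 0 such that H^1_k ⊆ H^2_i. -/
open Pointwise MeasureTheory

/-- Compatibility condition defining the inverse limit `lim_{←i} (G/Γᵢ, πᵢ)`: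
a sequence of cosets is compatible if any representative of the `(i+1)`-th coordinate
also represents the `i`-th coordinate. -/
def Compat {G : Type*} [Group G] (Γ : ℕ → Subgroup G) (x : ∀ i, G ⧸ Γ i) : Prop :=
  ∀ (i : ℕ) (g : G),
    (QuotientGroup.mk g : G ⧸ Γ (i + 1)) = x (i + 1) →
    (QuotientGroup.mk g : G ⧸ Γ i) = x i

/-- The subodometer `←G = lim_{←i} (G/Γᵢ, πᵢ)` associated to a sequence of subgroups. -/
def Subodometer {G : Type*} [Group G] (Γ : ℕ → Subgroup G) : Type _ :=
  { x : ∀ i, G ⧸ Γ i // Compat Γ x }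

/-- Topology of the subodometer: subspace topology of the product of the (discrete)
coset spaces. -/
instance {G : Type*} [Group G] (Γ : ℕ → Subgroup G) [TopologicalSpace G] :
    TopologicalSpace (Subodometer Γ) :=
  instTopologicalSpaceSubtype

lemma compat_smul {G : Type*} [Group G] (Γ : ℕ → Subgroup G) (g : G) (x : ∀ i, G ⧸ Γ i)
    (hx : Compat Γ x) : Compat Γ (fun i => g • x i) := by
  intro i h hh
  change (QuotientGroup.mk h : G ⧸ Γ (i + 1)) = g • x (i + 1) at hh
  show (QuotientGroup.mk h : G ⧸ Γ i) = g • x i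
  obtain ⟨a, ha⟩ := QuotientGroup.mk_surjective (x (i + 1))
  have h1 : (QuotientGroup.mk (g * a) : G ⧸ Γ (i + 1)) = g • x (i + 1) := by
    rw [← ha]; rfl
  rw [← h1] at hh
  have h2 : (QuotientGroup.mk (g⁻¹ * h) : G ⧸ Γ (i + 1)) = QuotientGroup.mk a := by
    rw [QuotientGroup.eq] at hh ⊢
    simpa [mul_assoc] using hh
  have h3 := hx i _ (h2.trans ha)
  have h4 : (QuotientGroup.mk (g * (g⁻¹ * h)) : G ⧸ Γ i) = g • x i := by
    rw [show (QuotientGroup.mk (g * (g⁻¹ * h)) : G ⧸ Γ i)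
        = g • (QuotientGroup.mk (g⁻¹ * h) : G ⧸ Γ i) from rfl, h3]
  simpa [mul_assoc] using h4

/-- The action of `G` on the subodometer by coordinatewise left multiplication. -/
instance {G : Type*} [Group G] (Γ : ℕ → Subgroup G) : MulAction G (Subodometer Γ) where
  smul g x := ⟨fun i => g • x.1 i, compat_smul Γ g x.1 x.2⟩
  one_smul x := Subtype.ext (funext fun i => one_smul G (x.1 i))
  mul_smul g h x := Subtype.ext (funext fun i => mul_smul g h (x.1 i))

/-- The distinguished point `e` of the subodometer: the sequence of cosets of the
neutral element. -/
def odoE {G : Type*} [Group G] (Γ : ℕ → Subgroup G) (hΓ : ∀ i, Γ (i + 1) ≤ Γ i) :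
    Subodometer Γ :=
  ⟨fun i => QuotientGroup.mk 1, by
    intro i g hg
    rw [QuotientGroup.eq] at hg ⊢
    exact hΓ i hg⟩

/-- The canonical map `τ : G → ←G`, `τ(g) = (gΓᵢ)ᵢ`. -/
def odoTau {G : Type*} [Group G] (Γ : ℕ → Subgroup G) (hΓ : ∀ i, Γ (i + 1) ≤ Γ i) (g : G) :
    Subodometer Γ :=
  ⟨fun i => QuotientGroup.mk g, by
    intro i h hh
    rw [QuotientGroup.eq] at hh ⊢
    exact hΓ i hh⟩

/-- A factor map between two `G`-systems: a continuous surjection commuting with the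
`G`-actions. -/
def IsFactorMap (G : Type*) {X Y : Type*} [Group G] [TopologicalSpace X] [TopologicalSpace Y]
    [MulAction G X] [MulAction G Y] (π : X → Y) : Prop :=
  Continuous π ∧ Function.Surjective π ∧ ∀ (g : G) (x : X), π (g • x) = g • π x

/-!
Since `π` commutes with the action and `π e₁ = e₂`, it sends `g • e₁` to `g • e₂`. For `g ∈ H¹ₖ`
with `k` large, `g • e₁` is close to `e₁`, so by continuity `g • e₂` agrees with `e₂` in
coordinate `i`, i.e. `g ∈ H²ᵢ`. Conversely, for a monotone choice of `k(i)` with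
`H¹_{k(i)} ≤ H²ᵢ` the coset projections `G/H¹_{k(i)} → G/H²ᵢ` assemble into a continuous
equivariant map sending `e₁` to `e₂`; its image is compact, hence closed, and contains the dense
orbit `G • e₂`, so the map is onto.
-/

open Function

instance {G : Type*} [Group G] [TopologicalSpace G] [DiscreteTopology G] (H : Subgroup G) :
    DiscreteTopology (G ⧸ H) :=
  discreteTopology_iff_forall_isOpen.mpr fun _ => isOpen_coinduced.mpr (isOpen_discrete _)

theorem QuotientGroup.mk_eq_mk_one_iff {G : Type*} [Group G] {H : Subgroup G} {g : G} :
    (g : G ⧸ H) = ((1 : G) : G ⧸ H) ↔ g ∈ H := by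
  rw [QuotientGroup.eq, mul_one, inv_mem_iff]

theorem Nat.exists_monotone_le_of_forall_exists {α : Type*} [Preorder α] {f : ℕ → α} {g : ℕ → α}
    (hf : Antitone f) (h : ∀ i, ∃ k, f k ≤ g i) : ∃ K : ℕ → ℕ, Monotone K ∧ ∀ i, f (K i) ≤ g i := by
  choose k hk using h
  refine ⟨fun i => (Finset.range (i + 1)).sup k, fun i j hij => ?_, fun i => ?_⟩
  · exact Finset.sup_mono (Finset.range_subset_range.mpr (Nat.succ_le_succ hij))
  · exact (hf (Finset.le_sup (Finset.self_mem_range_succ i))).trans (hk i)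

theorem Subgroup.quotientMapOfLE_smul {G : Type*} [Group G] {H K : Subgroup G} (h : H ≤ K)
    (g : G) (q : G ⧸ H) : quotientMapOfLE h (g • q) = g • quotientMapOfLE h q :=
  QuotientGroup.induction_on q fun _ => rfl

theorem Continuous.surjective_of_denseRange {X Y : Type*} [TopologicalSpace X]
    [TopologicalSpace Y] [CompactSpace X] [T2Space Y] {f : X → Y} (hf : Continuous f)
    (hd : DenseRange f) : Surjective f := by
  rw [← Set.range_eq_univ, ← (isCompact_range hf).isClosed.closure_eq, hd.closure_range]

section

variable {G : Type*} [Group G] {Γ : ℕ → Subgroup G}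

theorem Compat.mk_eq_of_le {x : ∀ i, G ⧸ Γ i} (hx : Compat Γ x) (g : G) {m n : ℕ} (hmn : m ≤ n) :
    (g : G ⧸ Γ n) = x n → (g : G ⧸ Γ m) = x m := by
  induction n, hmn using Nat.le_induction with
  | base => exact id
  | succ n _ ih => exact fun hg => ih (hx n g hg)

theorem Compat.quotientMapOfLE_comp {Γ₁ Γ₂ : ℕ → Subgroup G} (h₂ : ∀ i, Γ₂ (i + 1) ≤ Γ₂ i)
    {K : ℕ → ℕ} (hK : Monotone K) (hKΓ : ∀ i, Γ₁ (K i) ≤ Γ₂ i) {x : ∀ i, G ⧸ Γ₁ i}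
    (hx : Compat Γ₁ x) : Compat Γ₂ fun i => Subgroup.quotientMapOfLE (hKΓ i) (x (K i)) := by
  intro i g hg
  dsimp only at hg ⊢
  obtain ⟨a, ha⟩ := QuotientGroup.mk_surjective (x (K (i + 1)))
  rw [← ha, Subgroup.quotientMapOfLE_apply_mk] at hg
  rw [← hx.mk_eq_of_le a (hK i.le_succ) ha, Subgroup.quotientMapOfLE_apply_mk]
  simpa using congrArg (Subgroup.quotientMapOfLE (h₂ i)) hg

namespace Subodometer

theorem apply_eq_of_le (x y : Subodometer Γ) {m n : ℕ} (hmn : m ≤ n) (h : x.1 n = y.1 n) :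
    x.1 m = y.1 m := by
  obtain ⟨g, hg⟩ := QuotientGroup.mk_surjective (x.1 n)
  rw [← x.2.mk_eq_of_le g hmn hg, y.2.mk_eq_of_le g hmn (hg.trans h)]

theorem exists_forall_apply_eq_imp_mem [TopologicalSpace G] {U : Set (Subodometer Γ)}
    (hU : IsOpen U) {x : Subodometer Γ} (hx : x ∈ U) :
    ∃ n, ∀ y : Subodometer Γ, y.1 n = x.1 n → y ∈ U := by
  obtain ⟨V, hV, rfl⟩ := isOpen_induced_iff.mp hU
  obtain ⟨I, u, hu, hsub⟩ := isOpen_pi_iff.mp hV _ hx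
  refine ⟨I.sup id, fun y hy => hsub fun j hj => ?_⟩
  have hjn : j ≤ I.sup id := Finset.le_sup (f := id) hj
  rw [apply_eq_of_le y x hjn hy]
  exact (hu j hj).2

instance [TopologicalSpace G] [DiscreteTopology G] : T2Space (Subodometer Γ) :=
  inferInstanceAs (T2Space {x : ∀ i, G ⧸ Γ i // Compat Γ x})

theorem isClosed_setOf_compat [TopologicalSpace G] [DiscreteTopology G] :
    IsClosed {x : ∀ i, G ⧸ Γ i | Compat Γ x} := by
  simp only [Compat, Set.ofPred_forall]
  exact isClosed_iInter fun i => isClosed_iInter fun g =>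
    isClosed_imp ((isOpen_discrete _).preimage (continuous_apply _))
      (isClosed_eq continuous_const (continuous_apply _))

theorem compactSpace [TopologicalSpace G] [DiscreteTopology G]
    (hfin : ∀ i, (Γ i).FiniteIndex) : CompactSpace (Subodometer Γ) :=
  have (i : ℕ) : CompactSpace (G ⧸ Γ i) := by have := hfin i; infer_instance
  isCompact_iff_compactSpace.mp isClosed_setOf_compat.isCompact

variable (Γ) (hΓ : ∀ i, Γ (i + 1) ≤ Γ i)

theorem smul_odoE_apply (g : G) (i : ℕ) : (g • odoE Γ hΓ).1 i = g :=
  (MulAction.Quotient.smul_mk (Γ i) g 1).trans (congrArg _ (mul_one g))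

theorem denseRange_smul_odoE [TopologicalSpace G] : DenseRange (fun g : G => g • odoE Γ hΓ) := by
  refine dense_iff_inter_open.mpr fun U hU ⟨y, hy⟩ => ?_
  obtain ⟨n, hn⟩ := exists_forall_apply_eq_imp_mem hU hy
  obtain ⟨g, hg⟩ := QuotientGroup.mk_surjective (y.1 n)
  exact ⟨g • odoE Γ hΓ, hn _ ((smul_odoE_apply Γ hΓ g n).trans hg), g, rfl⟩

section Map

variable {Γ₁ Γ₂ : ℕ → Subgroup G} (h₂ : ∀ i, Γ₂ (i + 1) ≤ Γ₂ i) {K : ℕ → ℕ} (hK : Monotone K)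
  (hKΓ : ∀ i, Γ₁ (K i) ≤ Γ₂ i)

def map (x : Subodometer Γ₁) : Subodometer Γ₂ :=
  ⟨fun i => Subgroup.quotientMapOfLE (hKΓ i) (x.1 (K i)), x.2.quotientMapOfLE_comp h₂ hK hKΓ⟩

theorem continuous_map [TopologicalSpace G] [DiscreteTopology G] :
    Continuous (map h₂ hK hKΓ) :=
  (continuous_pi fun i => continuous_of_discreteTopology.comp
    ((continuous_apply (K i)).comp continuous_subtype_val)).subtype_mk _

theorem map_smul (g : G) (x : Subodometer Γ₁) : map h₂ hK hKΓ (g • x) = g • map h₂ hK hKΓ x :=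
  Subtype.ext (funext fun i => Subgroup.quotientMapOfLE_smul (hKΓ i) g (x.1 (K i)))

theorem map_odoE (h₁ : ∀ i, Γ₁ (i + 1) ≤ Γ₁ i) : map h₂ hK hKΓ (odoE Γ₁ h₁) = odoE Γ₂ h₂ :=
  rfl

theorem surjective_map [TopologicalSpace G] [DiscreteTopology G] (h₁ : ∀ i, Γ₁ (i + 1) ≤ Γ₁ i)
    (hfin : ∀ i, (Γ₁ i).FiniteIndex) : Surjective (map h₂ hK hKΓ) := by
  have := compactSpace hfin
  refine (continuous_map h₂ hK hKΓ).surjective_of_denseRange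
    (DenseRange.of_comp (g := fun g : G => g • odoE Γ₁ h₁) ?_)
  simpa only [comp_def, map_smul, map_odoE] using denseRange_smul_odoE Γ₂ h₂

end Map

theorem exists_le_of_continuous_of_smul_comm [TopologicalSpace G] [DiscreteTopology G]
    {Γ₁ Γ₂ : ℕ → Subgroup G} (h₁ : ∀ i, Γ₁ (i + 1) ≤ Γ₁ i) (h₂ : ∀ i, Γ₂ (i + 1) ≤ Γ₂ i)
    {π : Subodometer Γ₁ → Subodometer Γ₂} (hcont : Continuous π)
    (hsmul : ∀ (g : G) x, π (g • x) = g • π x) (he : π (odoE Γ₁ h₁) = odoE Γ₂ h₂) (i : ℕ) :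
    ∃ k, Γ₁ k ≤ Γ₂ i := by
  have hU : IsOpen {x | (π x).1 i = (odoE Γ₂ h₂).1 i} :=
    (isOpen_discrete {(odoE Γ₂ h₂).1 i}).preimage
      ((continuous_apply i).comp (continuous_subtype_val.comp hcont))
  obtain ⟨k, hk⟩ := exists_forall_apply_eq_imp_mem hU (x := odoE Γ₁ h₁) <| by
    rw [Set.mem_ofPred_eq, he]
  refine ⟨k, fun g hg => ?_⟩
  have hgU := hk (g • odoE Γ₁ h₁) <| by
    rw [smul_odoE_apply]
    exact QuotientGroup.mk_eq_mk_one_iff.2 hg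
  rw [Set.mem_ofPred_eq, hsmul, he, smul_odoE_apply] at hgU
  exact QuotientGroup.mk_eq_mk_one_iff.1 hgU

end Subodometer

end

theorem statement0_general {G : Type*} [Group G] [TopologicalSpace G] [DiscreteTopology G]
    (H1 H2 : ℕ → Subgroup G)
    (h1dec : ∀ i, H1 (i + 1) ≤ H1 i) (h2dec : ∀ i, H2 (i + 1) ≤ H2 i)
    (h1fin : ∀ i, (H1 i).FiniteIndex) :
    (∃ π : Subodometer H1 → Subodometer H2,
        IsFactorMap G π ∧ π (odoE H1 h1dec) = odoE H2 h2dec)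
      ↔ ∀ i : ℕ, ∃ k : ℕ, H1 k ≤ H2 i := by
  refine ⟨fun ⟨π, ⟨hcont, _, hsmul⟩, he⟩ =>
    Subodometer.exists_le_of_continuous_of_smul_comm h1dec h2dec hcont hsmul he, fun h => ?_⟩
  obtain ⟨K, hK, hKH⟩ := Nat.exists_monotone_le_of_forall_exists (antitone_nat_of_succ_le h1dec) h
  exact ⟨Subodometer.map h2dec hK hKH,
    ⟨Subodometer.continuous_map h2dec hK hKH,
      Subodometer.surjective_map h2dec hK hKH h1dec h1fin, Subodometer.map_smul h2dec hK hKH⟩,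
    Subodometer.map_odoE h2dec hK hKH h1dec⟩

/-- Lemma `factor`: there is a factor map `←G₁ → ←G₂` sending `e₁` to
`e₂` iff every `H²ᵢ` contains some `H¹ₖ`. -/
theorem statement0 {G : Type*} [Group G] [Group.FG G] [TopologicalSpace G] [DiscreteTopology G]
    (H1 H2 : ℕ → Subgroup G)
    (h1dec : ∀ i, H1 (i + 1) ≤ H1 i) (h2dec : ∀ i, H2 (i + 1) ≤ H2 i)
    (h1fin : ∀ i, (H1 i).FiniteIndex) (h2fin : ∀ i, (H2 i).FiniteIndex) :
    (∃ π : Subodometer H1 → Subodometer H2,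
        IsFactorMap G π ∧ π (odoE H1 h1dec) = odoE H2 h2dec)
      ↔ ∀ i : ℕ, ∃ k : ℕ, H1 k ≤ H2 i :=
  statement0_general H1 H2 h1dec h2dec h1fin
end

section
/- Let G be a discrete group acting by homeomorphisms on a compact metric space X such that the action is minimal (every G-orbit is dense in X). If Γ is a finite-index subgroup of G, then for every x ∈ X the closure Ω_Γ(x) of the Γ-orbit {γ·x : γ ∈ Γ} is a minimal set for the restricted Γ-action: every Γ-orbit of a point of Ω_Γ(x) is dense in Ω_Γ(x). -/
/-!
Pass to the normal core `N` of `Γ`, a normal subgroup of finite index. By Zorn's lemma and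
compactness some point `m` has an `N`-minimal orbit closure. As `N` has finite index, the closure
of a `G`-orbit is covered by finitely many translates `g • Ω_N(m)`; by minimality of the
`G`-action this covers `X`, and since `N` is normal each translate is again `N`-minimal. So every
`N`-orbit closure is minimal, and covering `Ω_Γ(x)` by finitely many translates `γ • Ω_N(x)`,
`γ ∈ Γ`, shows that every point of `Ω_Γ(x)` has `x` in its `Γ`-orbit closure.
-/

open Set Pointwise

section OrbitClosure

variable {G X : Type*} [Group G] [TopologicalSpace X] [MulAction G X]

def orbitClosure (H : Subgroup G) (x : X) : Set X :=
  closure ((fun g : G => g • x) '' (H : Set G))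

def HasMinimalOrbitClosure (H : Subgroup G) (x : X) : Prop :=
  ∀ y ∈ orbitClosure H x, x ∈ orbitClosure H y

variable {H K : Subgroup G} {x y : X}

theorem mem_orbitClosure_self : x ∈ orbitClosure H x :=
  subset_closure ⟨1, H.one_mem, one_smul G x⟩

theorem orbitClosure_mono (hHK : H ≤ K) : orbitClosure H x ⊆ orbitClosure K x :=
  closure_mono (image_mono hHK)

variable [ContinuousConstSMul G X]

theorem smul_mem_orbitClosure {h : G} (hh : h ∈ H) (hy : y ∈ orbitClosure H x) :
    h • y ∈ orbitClosure H x := by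
  refine smul_closure_subset h _ (smul_mem_smul_set hy) |> closure_mono ?_
  rintro _ ⟨_, ⟨g, hg, rfl⟩, rfl⟩
  exact ⟨h * g, H.mul_mem hh hg, mul_smul h g x⟩

theorem orbitClosure_subset_of_mem (hy : y ∈ orbitClosure H x) :
    orbitClosure H y ⊆ orbitClosure H x :=
  closure_minimal (by rintro _ ⟨h, hh, rfl⟩; exact smul_mem_orbitClosure hh hy) isClosed_closure

theorem smul_mem_orbitClosure_smul [H.Normal] (g : G) (hy : y ∈ orbitClosure H x) :
    g • y ∈ orbitClosure H (g • x) := by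
  refine smul_closure_subset g _ (smul_mem_smul_set hy) |> closure_mono ?_
  rintro _ ⟨_, ⟨h, hh, rfl⟩, rfl⟩
  refine ⟨g * h * g⁻¹, ‹H.Normal›.conj_mem h hh g, ?_⟩
  simp only [smul_smul, inv_mul_cancel_right]

theorem exists_inv_smul_mem_orbitClosure [(H.subgroupOf K).FiniteIndex]
    (hy : y ∈ orbitClosure K x) : ∃ k ∈ K, k⁻¹ • y ∈ orbitClosure H x := by
  let r : K ⧸ H.subgroupOf K → G := fun q => (q.out : G)
  have hcover : (fun g : G => g • x) '' K ⊆ ⋃ q, r q • (fun g : G => g • x) '' H := by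
    rintro _ ⟨k, hk, rfl⟩
    let q : K ⧸ H.subgroupOf K := (⟨k, hk⟩ : K)
    have hq : (r q)⁻¹ * k ∈ H := by
      have := QuotientGroup.eq.mp (QuotientGroup.out_eq' q)
      simpa [Subgroup.mem_subgroupOf] using this
    refine mem_iUnion.2 ⟨q, mem_smul_set_iff_inv_smul_mem.2 ⟨_, hq, mul_smul _ _ _⟩⟩
  have hy' : y ∈ ⋃ q, r q • orbitClosure H x := by
    simpa only [orbitClosure, closure_iUnion_of_finite, closure_smul] using closure_mono hcover hy
  obtain ⟨q, hq⟩ := mem_iUnion.1 hy'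
  exact ⟨r q, q.out.2, mem_smul_set_iff_inv_smul_mem.1 hq⟩

theorem HasMinimalOrbitClosure.of_mem (hx : HasMinimalOrbitClosure H x)
    (hy : y ∈ orbitClosure H x) : HasMinimalOrbitClosure H y := fun z hz =>
  orbitClosure_subset_of_mem (hx z (orbitClosure_subset_of_mem hy hz)) hy

theorem HasMinimalOrbitClosure.smul [H.Normal] (hx : HasMinimalOrbitClosure H x) (g : G) :
    HasMinimalOrbitClosure H (g • x) := by
  intro y hy
  have hx' : x ∈ orbitClosure H (g⁻¹ • y) :=
    hx _ (by simpa using smul_mem_orbitClosure_smul g⁻¹ hy)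
  simpa using smul_mem_orbitClosure_smul g hx'

theorem exists_hasMinimalOrbitClosure [CompactSpace X] [Nonempty X] (H : Subgroup G) :
    ∃ x : X, HasMinimalOrbitClosure H x := by
  obtain ⟨x₀⟩ := ‹Nonempty X›
  have hchains : ∀ c ⊆ range (orbitClosure (X := X) H), IsChain (· ⊆ ·) c → c.Nonempty →
      ∃ lb ∈ range (orbitClosure H), ∀ s ∈ c, lb ⊆ s := by
    rintro c hcS hchain ⟨s, hs⟩
    have : Nonempty c := ⟨⟨s, hs⟩⟩
    obtain ⟨z, hz⟩ : (⋂₀ c).Nonempty := by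
      have hdir : DirectedOn (· ⊇ ·) c := fun s hs t ht =>
        (hchain.total hs ht).elim (fun h => ⟨s, hs, subset_rfl, h⟩)
          (fun h => ⟨t, ht, h, subset_rfl⟩)
      refine IsCompact.nonempty_sInter_of_directed_nonempty_isCompact_isClosed hdir
        (fun t ht => ?_) (fun t ht => ?_) (fun t ht => ?_)
      all_goals obtain ⟨p, rfl⟩ := hcS ‹_›
      exacts [⟨p, mem_orbitClosure_self⟩, isClosed_closure.isCompact, isClosed_closure]
    refine ⟨orbitClosure H z, mem_range_self z, fun t ht => ?_⟩
    obtain ⟨p, rfl⟩ := hcS ht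
    exact orbitClosure_subset_of_mem (mem_sInter.1 hz _ ht)
  obtain ⟨_, -, ⟨x, rfl⟩, hmin⟩ := zorn_superset_nonempty _ hchains _ (mem_range_self x₀)
  exact ⟨x, fun y hy =>
    hmin (mem_range_self y) (orbitClosure_subset_of_mem hy) mem_orbitClosure_self⟩

variable [CompactSpace X] [MulAction.IsMinimal G X]

theorem hasMinimalOrbitClosure_of_normal (N : Subgroup G) [N.Normal] [N.FiniteIndex] (x : X) :
    HasMinimalOrbitClosure N x := by
  have : Nonempty X := ⟨x⟩
  obtain ⟨m, hm⟩ := exists_hasMinimalOrbitClosure (X := X) N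
  have hxm : x ∈ orbitClosure (⊤ : Subgroup G) m := by
    simpa [orbitClosure] using (MulAction.dense_orbit G m).closure_eq ▸ mem_univ x
  obtain ⟨g, -, hg⟩ := exists_inv_smul_mem_orbitClosure (H := N) hxm
  simpa using (hm.of_mem hg).smul g

theorem hasMinimalOrbitClosure_of_finiteIndex (Γ : Subgroup G) [Γ.FiniteIndex] (x : X) :
    HasMinimalOrbitClosure Γ x := by
  intro y hy
  obtain ⟨γ, hγ, hγy⟩ := exists_inv_smul_mem_orbitClosure (H := Γ.normalCore) hy
  have hx : x ∈ orbitClosure Γ (γ⁻¹ • y) :=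
    orbitClosure_mono Γ.normalCore_le (hasMinimalOrbitClosure_of_normal _ x _ hγy)
  exact orbitClosure_subset_of_mem (smul_mem_orbitClosure (Γ.inv_mem hγ) mem_orbitClosure_self) hx

end OrbitClosure

/-- Lemma `minimal`: if the `G`-action on `X` is minimal and
`Γ ≤ G` has finite index, then the closure of every `Γ`-orbit is `Γ`-minimal. -/
theorem statement4 {G X : Type*} [Group G] [MetricSpace X] [CompactSpace X] [MulAction G X]
    (hc : ∀ g : G, Continuous fun x : X => g • x)
    (hmin : ∀ x : X, Dense (Set.range fun g : G => g • x))
    (Γ : Subgroup G) (hΓ : Γ.FiniteIndex) (x : X) :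
    ∀ y ∈ closure ((fun g : G => g • x) '' (Γ : Set G)),
      closure ((fun g : G => g • x) '' (Γ : Set G)) ⊆
        closure ((fun g : G => g • y) '' (Γ : Set G)) := by
  have : ContinuousConstSMul G X := ⟨hc⟩
  have : MulAction.IsMinimal G X := ⟨hmin⟩
  exact fun y hy => orbitClosure_subset_of_mem (hasMinimalOrbitClosure_of_finiteIndex Γ x y hy)
end

section
/- Let G be a discrete finitely generated group acting by homeomorphisms on a compact metric space X, and let x ∈ X be a point whose G-orbit is dense in X. Then x is regularly recurrent (respectively, strongly regularly recurrent) if and only if there exists a decreasing sequence (C_i)_{i≥0} of clopen neighborhoods of x with ⋂_{i≥0} C_i = {x} forming a fundamental system of neighborhoods of x, together with a decreasing sequence (Γ_i)_{i≥0} of finite-index (respectively, finite-index normal) subgroups of G, such that for every i ≥ 0 and every y ∈ C_i the set of return times T_{C_i}(y) equals Γ_i. -/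
/-!
For a finite-index normal subgroup `Γ`, regular recurrence of `x` makes `closure (Γ • x)` the
`Γ`-orbit closure of each of its points, so its `G`-translates are pairwise equal or disjoint.
There are finitely many of them and they cover `X` by density of the orbit, hence
`closure (Γ • x)` is clopen and the return times of any of its points form its stabilizer.
Taking `Γ` to be the normal core of a subgroup that returns `x` into a small neighbourhood gives
arbitrarily small such sets, and a diagonal choice along a countable neighbourhood basis gives the
system. In the strong case the given clopen set `W` already works: by density of the orbit,
`T_W(y) = T_W(x)` for every `y ∈ W`.
-/

open Pointwise MeasureTheory

/-- The set of return times of `x` to `A`: `T_A(x) = {g ∈ G : g • x ∈ A}`. -/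
def ReturnTimes (G : Type*) {X : Type*} [SMul G X] (x : X) (A : Set X) : Set G :=
  {g : G | g • x ∈ A}

/-- A point `x` is regularly recurrent if every open neighborhood of `x` contains the
`Γ`-orbit of `x` for some finite-index subgroup `Γ` of `G`. -/
def RegularlyRecurrent (G : Type*) {X : Type*} [Group G] [TopologicalSpace X] [MulAction G X]
    (x : X) : Prop :=
  ∀ V : Set X, IsOpen V → x ∈ V →
    ∃ Γ : Subgroup G, Γ.FiniteIndex ∧ (Γ : Set G) ⊆ ReturnTimes G x V

/-- A point `x` is strongly regularly recurrent if every open neighborhood `V` of `x`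
contains a clopen neighborhood `W` of `x` whose return-time set `T_W(x)` is a
finite-index normal subgroup of `G`. -/
def StronglyRegularlyRecurrent (G : Type*) {X : Type*} [Group G] [TopologicalSpace X]
    [MulAction G X] (x : X) : Prop :=
  ∀ V : Set X, IsOpen V → x ∈ V →
    ∃ W : Set X, IsClopen W ∧ x ∈ W ∧ W ⊆ V ∧
      ∃ Γ : Subgroup G, Γ.Normal ∧ Γ.FiniteIndex ∧ ReturnTimes G x W = (Γ : Set G)

/-- A fundamental system of clopen neighborhoods `(Cᵢ)` of `x` with `⋂ᵢ Cᵢ = {x}`,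
together with a decreasing sequence `(Γᵢ)` of finite-index subgroups such that the return
times of every `y ∈ Cᵢ` to `Cᵢ` are exactly `Γᵢ`. -/
def FundamentalClopenSystem (G : Type*) {X : Type*} [Group G] [TopologicalSpace X]
    [MulAction G X] (x : X) (C : ℕ → Set X) (Γ : ℕ → Subgroup G) : Prop :=
  (∀ i, IsClopen (C i)) ∧ (∀ i, x ∈ C i) ∧ (∀ i, C (i + 1) ⊆ C i) ∧
  (⋂ i, C i) = {x} ∧ (∀ V : Set X, IsOpen V → x ∈ V → ∃ i, C i ⊆ V) ∧
  (∀ i, Γ (i + 1) ≤ Γ i) ∧ (∀ i, (Γ i).FiniteIndex) ∧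
  (∀ i, ∀ y ∈ C i, ReturnTimes G y (C i) = ((Γ i) : Set G))

open MulAction Topology

section OrbitClosure

variable {G X : Type*} [Group G] [MulAction G X]

theorem finite_range_smul_set_of_le_stabilizer {A : Set X} {K : Subgroup G} [K.FiniteIndex]
    (hK : K ≤ stabilizer G A) : (Set.range fun g : G => g • A).Finite :=
  have := Subgroup.finiteIndex_of_le hK
  Set.finite_coe_iff.mp (Finite.of_equiv _ (orbitEquivQuotientStabilizer G A).symm)

theorem orbit_subset_orbit_of_le {H K : Subgroup G} (hHK : H ≤ K) (x : X) :
    orbit H x ⊆ orbit K x := by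
  rintro _ ⟨⟨g, hg⟩, rfl⟩
  exact ⟨⟨g, hHK hg⟩, rfl⟩

theorem coe_subset_returnTimes_iff {Γ : Subgroup G} {x : X} {V : Set X} :
    (Γ : Set G) ⊆ ReturnTimes G x V ↔ orbit Γ x ⊆ V :=
  ⟨fun h => Set.range_subset_iff.2 fun γ => h γ.2, fun h γ hγ => h ⟨⟨γ, hγ⟩, rfl⟩⟩

variable [TopologicalSpace X]

theorem RegularlyRecurrent.exists_closure_orbit_subset [RegularSpace X] {x : X}
    (hx : RegularlyRecurrent G x) {U : Set X} (hU : U ∈ 𝓝 x) :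
    ∃ Λ : Subgroup G, Λ.FiniteIndex ∧ closure (orbit Λ x) ⊆ U := by
  obtain ⟨F, hF, hFclosed, hFU⟩ := exists_mem_nhds_isClosed_subset hU
  obtain ⟨Λ, hΛ, hΛF⟩ := hx (interior F) isOpen_interior (mem_interior_iff_mem_nhds.2 hF)
  exact ⟨Λ, hΛ, (closure_minimal ((coe_subset_returnTimes_iff.1 hΛF).trans interior_subset)
    hFclosed).trans hFU⟩

variable [ContinuousConstSMul G X]

theorem isClosed_biUnion_smul_of_le_stabilizer {A : Set X} (hA : IsClosed A) {K : Subgroup G}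
    [K.FiniteIndex] (hK : K ≤ stabilizer G A) (S : Set G) : IsClosed (⋃ g ∈ S, g • A) := by
  rw [← Set.sUnion_image, Set.sUnion_eq_biUnion]
  exact ((finite_range_smul_set_of_le_stabilizer hK).subset (Set.image_subset_range _ _))
    |>.isClosed_biUnion (by rintro _ ⟨g, -, rfl⟩; exact hA.smul g)

theorem le_stabilizer_closure_orbit (Γ : Subgroup G) (x : X) :
    Γ ≤ stabilizer G (closure (orbit Γ x)) := fun γ hγ => by
  rw [mem_stabilizer_iff, ← closure_smul]
  exact congrArg closure (smul_orbit (⟨γ, hγ⟩ : Γ) x)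

theorem closure_orbit_subset_of_mem {Γ : Subgroup G} {x y : X} (hy : y ∈ closure (orbit Γ x)) :
    closure (orbit Γ y) ⊆ closure (orbit Γ x) := by
  refine closure_minimal ?_ isClosed_closure
  rintro _ ⟨γ, rfl⟩
  rw [← le_stabilizer_closure_orbit Γ x γ.2]
  exact Set.smul_mem_smul_set hy

theorem smul_closure_orbit_of_normal (Γ : Subgroup G) [Γ.Normal] (g : G) (x : X) :
    g • closure (orbit Γ x) = closure (orbit Γ (g • x)) := by
  rw [← closure_smul, smul_orbit_eq_orbit_smul]

section RegularlyRecurrent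

variable [RegularSpace X] {x : X}

/-- `Γ • x` lies in the finite union of the closed sets `γ • closure ((Λ ⊓ Γ) • x) ⊆ γ • U`,
`γ ∈ Γ`, where `Λ • x ⊆ U`; so `y` lies in one of them and `γ⁻¹ • y ∈ U`. -/
theorem RegularlyRecurrent.mem_closure_orbit_of_mem (hx : RegularlyRecurrent G x)
    {Γ : Subgroup G} [Γ.FiniteIndex] {y : X} (hy : y ∈ closure (orbit Γ x)) :
    x ∈ closure (orbit Γ y) := by
  refine mem_closure_iff_nhds.2 fun U hU => ?_
  obtain ⟨Λ, hΛ, hΛU⟩ := hx.exists_closure_orbit_subset hU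
  let A := closure (orbit (Λ ⊓ Γ : Subgroup G) x)
  have hAU : A ⊆ U := (closure_mono (orbit_subset_orbit_of_le inf_le_left x)).trans hΛU
  have hcover : orbit Γ x ⊆ ⋃ γ ∈ (Γ : Set G), γ • A := by
    rintro _ ⟨γ, rfl⟩
    exact Set.mem_biUnion γ.2 (Set.smul_mem_smul_set (subset_closure (mem_orbit_self x)))
  have hclosed := isClosed_biUnion_smul_of_le_stabilizer isClosed_closure
    (le_stabilizer_closure_orbit (Λ ⊓ Γ) x) (Γ : Set G)
  obtain ⟨γ, hγ, hyγ⟩ := Set.mem_iUnion₂.1 (closure_minimal hcover hclosed hy)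
  exact ⟨γ⁻¹ • y, hAU (Set.mem_smul_set_iff_inv_smul_mem.1 hyγ), ⟨γ⁻¹, Γ.inv_mem hγ⟩, rfl⟩

theorem RegularlyRecurrent.closure_orbit_eq_of_mem (hx : RegularlyRecurrent G x)
    {Γ : Subgroup G} [Γ.FiniteIndex] {y : X} (hy : y ∈ closure (orbit Γ x)) :
    closure (orbit Γ y) = closure (orbit Γ x) :=
  (closure_orbit_subset_of_mem hy).antisymm
    (closure_orbit_subset_of_mem (hx.mem_closure_orbit_of_mem hy))

theorem RegularlyRecurrent.smul_closure_orbit_eq (hx : RegularlyRecurrent G x)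
    {Γ : Subgroup G} [Γ.Normal] [Γ.FiniteIndex] {y : X} (hy : y ∈ closure (orbit Γ x)) {g : G}
    (hgy : g • y ∈ closure (orbit Γ x)) :
    g • closure (orbit Γ x) = closure (orbit Γ x) := by
  rw [← hx.closure_orbit_eq_of_mem hy, smul_closure_orbit_of_normal,
    hx.closure_orbit_eq_of_mem hgy, hx.closure_orbit_eq_of_mem hy]

theorem RegularlyRecurrent.isClopen_closure_orbit (hx : RegularlyRecurrent G x)
    (hdense : Dense (Set.range fun g : G => g • x)) (Γ : Subgroup G) [Γ.Normal] [Γ.FiniteIndex] :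
    IsClopen (closure (orbit Γ x)) := by
  set M := closure (orbit Γ x)
  have hstab := le_stabilizer_closure_orbit Γ x
  have hcover : ∀ z, ∃ g : G, z ∈ g • M := by
    have hsub : closure (Set.range fun g : G => g • x) ⊆ ⋃ g ∈ (Set.univ : Set G), g • M := by
      refine closure_minimal ?_ (isClosed_biUnion_smul_of_le_stabilizer isClosed_closure hstab _)
      rintro _ ⟨g, rfl⟩
      exact Set.mem_biUnion (Set.mem_univ g)
        (Set.smul_mem_smul_set (subset_closure (mem_orbit_self x)))
    intro z
    simpa using hsub (hdense.closure_eq ▸ Set.mem_univ z)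
  have hcompl : Mᶜ = ⋃ g ∈ {g : G | g • M ≠ M}, g • M := by
    ext z
    simp only [Set.mem_compl_iff, Set.mem_iUnion₂, Set.mem_ofPred_eq, exists_prop]
    constructor
    · intro hz
      obtain ⟨g, hg⟩ := hcover z
      exact ⟨g, fun h => hz (h ▸ hg), hg⟩
    · rintro ⟨g, hgM, hz⟩ hzM
      exact hgM (hx.smul_closure_orbit_eq (Set.mem_smul_set_iff_inv_smul_mem.1 hz)
        (by rwa [smul_inv_smul]))
  refine ⟨isClosed_closure, isClosed_compl_iff.1 ?_⟩
  rw [hcompl]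
  exact isClosed_biUnion_smul_of_le_stabilizer isClosed_closure hstab _

end RegularlyRecurrent

end OrbitClosure

def IsClopenReturnNhd (G : Type*) {X : Type*} [Group G] [MulAction G X] [TopologicalSpace X]
    (x : X) (C : Set X) (Γ : Subgroup G) : Prop :=
  IsClopen C ∧ x ∈ C ∧ Γ.FiniteIndex ∧ ∀ y ∈ C, ReturnTimes G y C = Γ

section FundamentalSystem

variable {G X : Type*} [Group G] [MulAction G X] [TopologicalSpace X]

theorem IsClopenReturnNhd.mem_iff {x : X} {C : Set X} {Γ : Subgroup G}
    (h : IsClopenReturnNhd G x C Γ) (g : G) : g ∈ Γ ↔ g • x ∈ C :=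
  (Set.ext_iff.1 (h.2.2.2 x h.2.1) g).symm

theorem IsClopenReturnNhd.le_of_subset {x : X} {C D : Set X} {Γ Δ : Subgroup G}
    (hC : IsClopenReturnNhd G x C Γ) (hD : IsClopenReturnNhd G x D Δ) (hCD : C ⊆ D) : Γ ≤ Δ :=
  fun g hg => (hD.mem_iff g).2 (hCD ((hC.mem_iff g).1 hg))

theorem returnTimes_eq_of_isClopen [ContinuousConstSMul G X] {x : X}
    (hdense : Dense (Set.range fun g : G => g • x)) {W : Set X} (hW : IsClopen W)
    {Γ : Subgroup G} (hΓ : ReturnTimes G x W = Γ) {y : X} (hy : y ∈ W) :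
    ReturnTimes G y W = Γ := by
  have hmem : ∀ g : G, g • x ∈ W ↔ g ∈ Γ := fun g => Set.ext_iff.1 hΓ g
  have hnear : ∀ O, IsOpen O → y ∈ O → ∃ h ∈ Γ, h • x ∈ O := by
    intro O hO hyO
    obtain ⟨_, ⟨h, rfl⟩, hhO, hhW⟩ := hdense.exists_mem_open (hO.inter hW.isOpen) ⟨y, hyO, hy⟩
    exact ⟨h, (hmem h).1 hhW, hhO⟩
  ext g
  constructor
  · intro hgy
    obtain ⟨h, hh, hgh⟩ := hnear _ (hW.isOpen.preimage (continuous_const_smul g)) hgy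
    have hgh' : g * h ∈ Γ := (hmem _).1 (by rwa [mul_smul])
    simpa using Γ.mul_mem hgh' (Γ.inv_mem hh)
  · intro hg
    by_contra hgy
    obtain ⟨h, hh, hgh⟩ :=
      hnear _ (hW.isClosed.isOpen_compl.preimage (continuous_const_smul g)) hgy
    exact hgh (by simpa [mul_smul] using (hmem _).2 (Γ.mul_mem hg hh))

theorem RegularlyRecurrent.exists_isClopenReturnNhd_subset [ContinuousConstSMul G X]
    [RegularSpace X] {x : X} (hx : RegularlyRecurrent G x)
    (hdense : Dense (Set.range fun g : G => g • x)) {V : Set X} (hV : V ∈ 𝓝 x) :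
    ∃ C ⊆ V, ∃ Γ : Subgroup G, IsClopenReturnNhd G x C Γ := by
  obtain ⟨Λ, hΛ, hΛV⟩ := hx.exists_closure_orbit_subset hV
  let M := closure (orbit Λ.normalCore x)
  have hstab := le_stabilizer_closure_orbit Λ.normalCore x
  refine ⟨M, (closure_mono (orbit_subset_orbit_of_le Λ.normalCore_le x)).trans hΛV,
    stabilizer G M, hx.isClopen_closure_orbit hdense _, subset_closure (mem_orbit_self x),
    Subgroup.finiteIndex_of_le hstab, fun y hy => ?_⟩
  ext g
  exact ⟨fun hgy => hx.smul_closure_orbit_eq hy hgy, fun hg => hg ▸ Set.smul_mem_smul_set hy⟩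

theorem StronglyRegularlyRecurrent.exists_isClopenReturnNhd_subset [ContinuousConstSMul G X]
    {x : X} (hx : StronglyRegularlyRecurrent G x)
    (hdense : Dense (Set.range fun g : G => g • x)) {V : Set X} (hV : V ∈ 𝓝 x) :
    ∃ C ⊆ V, ∃ Γ : Subgroup G, Γ.Normal ∧ IsClopenReturnNhd G x C Γ := by
  obtain ⟨W, hW, hxW, hWV, Γ, hN, hfi, hΓ⟩ :=
    hx (interior V) isOpen_interior (mem_interior_iff_mem_nhds.2 hV)
  exact ⟨W, hWV.trans interior_subset, Γ, hN, hW, hxW, hfi,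
    fun y hy => returnTimes_eq_of_isClopen hdense hW hΓ hy⟩

theorem exists_hasAntitoneBasis_isClopenReturnNhd [FirstCountableTopology X] {x : X}
    (P : Subgroup G → Prop) (step : ∀ V ∈ 𝓝 x, ∃ C ⊆ V, ∃ Γ, P Γ ∧ IsClopenReturnNhd G x C Γ) :
    ∃ (C : ℕ → Set X) (Γ : ℕ → Subgroup G),
      (𝓝 x).HasAntitoneBasis C ∧ ∀ i, P (Γ i) ∧ IsClopenReturnNhd G x (C i) (Γ i) := by
  have step' : ∀ V : Set X, ∃ (C : Set X) (Γ : Subgroup G),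
      V ∈ 𝓝 x → C ⊆ V ∧ P Γ ∧ IsClopenReturnNhd G x C Γ := by
    intro V
    by_cases hV : V ∈ 𝓝 x
    · obtain ⟨C, hCV, Γ, h⟩ := step V hV
      exact ⟨C, Γ, fun _ => ⟨hCV, h⟩⟩
    · exact ⟨∅, ⊥, fun h => absurd h hV⟩
  choose C Γ hC using step'
  obtain ⟨B, hB⟩ := (𝓝 x).exists_antitone_basis
  -- `V (n + 1)` is shrunk into `C (V n)` to make the clopen sets decrease.
  let V : ℕ → Set X := fun n => Nat.rec (B 0) (fun n Vn => C Vn ∩ B (n + 1)) n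
  have hV : ∀ n, V n ∈ 𝓝 x := by
    intro n
    induction n with
    | zero => exact hB.mem 0
    | succ n ih =>
      obtain ⟨-, -, hCl, hxC, -⟩ := hC _ ih
      exact Filter.inter_mem (hCl.isOpen.mem_nhds hxC) (hB.mem _)
  have hVB : ∀ n, V n ⊆ B n := by
    rintro (_ | n)
    exacts [subset_rfl, Set.inter_subset_right]
  refine ⟨fun n => C (V n), fun n => Γ (V n), ⟨?_, ?_⟩, fun n => (hC _ (hV n)).2⟩
  · refine hB.toHasBasis.to_hasBasis' (fun n _ => ⟨n, trivial, (hC _ (hV n)).1.trans (hVB n)⟩)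
      fun n _ => ?_
    obtain ⟨-, -, hCl, hxC, -⟩ := hC _ (hV n)
    exact hCl.isOpen.mem_nhds hxC
  · exact antitone_nat_of_succ_le fun n => (hC _ (hV (n + 1))).1.trans Set.inter_subset_left

theorem FundamentalClopenSystem.of_hasAntitoneBasis [T1Space X] {x : X} {C : ℕ → Set X}
    {Γ : ℕ → Subgroup G} (hC : (𝓝 x).HasAntitoneBasis C)
    (hret : ∀ i, IsClopenReturnNhd G x (C i) (Γ i)) : FundamentalClopenSystem G x C Γ := by
  have hbasis : ∀ V : Set X, IsOpen V → x ∈ V → ∃ i, C i ⊆ V :=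
    fun V hV hxV => hC.mem_iff.1 (hV.mem_nhds hxV)
  refine ⟨fun i => (hret i).1, fun i => (hret i).2.1, fun i => hC.antitone (Nat.le_succ i), ?_,
    hbasis, fun i => (hret (i + 1)).le_of_subset (hret i) (hC.antitone (Nat.le_succ i)),
    fun i => (hret i).2.2.1, fun i => (hret i).2.2.2⟩
  refine Set.Subset.antisymm (fun y hy => ?_) (Set.singleton_subset_iff.2 (Set.mem_iInter.2
    fun i => (hret i).2.1))
  by_contra hne
  obtain ⟨i, hi⟩ := hbasis {y}ᶜ isOpen_compl_singleton (Ne.symm hne)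
  exact hi (Set.mem_iInter.1 hy i) rfl

theorem exists_fundamentalClopenSystem [T1Space X] [FirstCountableTopology X] {x : X}
    (P : Subgroup G → Prop) (step : ∀ V ∈ 𝓝 x, ∃ C ⊆ V, ∃ Γ, P Γ ∧ IsClopenReturnNhd G x C Γ) :
    ∃ (C : ℕ → Set X) (Γ : ℕ → Subgroup G), (∀ i, P (Γ i)) ∧ FundamentalClopenSystem G x C Γ :=
  let ⟨C, Γ, hC, hret⟩ := exists_hasAntitoneBasis_isClopenReturnNhd P step
  ⟨C, Γ, fun i => (hret i).1, .of_hasAntitoneBasis hC fun i => (hret i).2⟩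

theorem FundamentalClopenSystem.regularlyRecurrent {x : X} {C : ℕ → Set X} {Γ : ℕ → Subgroup G}
    (h : FundamentalClopenSystem G x C Γ) : RegularlyRecurrent G x := by
  obtain ⟨-, hxC, -, -, hbasis, -, hfi, hret⟩ := h
  intro V hV hxV
  obtain ⟨i, hi⟩ := hbasis V hV hxV
  exact ⟨Γ i, hfi i, (hret i x (hxC i)).symm.subset.trans fun g hg => hi hg⟩

theorem FundamentalClopenSystem.stronglyRegularlyRecurrent {x : X} {C : ℕ → Set X}
    {Γ : ℕ → Subgroup G} (h : FundamentalClopenSystem G x C Γ) (hN : ∀ i, (Γ i).Normal) :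
    StronglyRegularlyRecurrent G x := by
  obtain ⟨hCl, hxC, -, -, hbasis, -, hfi, hret⟩ := h
  intro V hV hxV
  obtain ⟨i, hi⟩ := hbasis V hV hxV
  exact ⟨C i, hCl i, hxC i, hi, Γ i, hN i, hfi i, hret i x (hxC i)⟩

end FundamentalSystem

theorem statement6_general {G X : Type*} [Group G] [MetricSpace X]
    [MulAction G X]
    (hc : ∀ g : G, Continuous fun y : X => g • y)
    (x : X) (hdense : Dense (Set.range fun g : G => g • x)) :
    (RegularlyRecurrent G x ↔
      ∃ (C : ℕ → Set X) (Γ : ℕ → Subgroup G), FundamentalClopenSystem G x C Γ) ∧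
    (StronglyRegularlyRecurrent G x ↔
      ∃ (C : ℕ → Set X) (Γ : ℕ → Subgroup G),
        (∀ i, (Γ i).Normal) ∧ FundamentalClopenSystem G x C Γ) := by
  have : ContinuousConstSMul G X := ⟨hc⟩
  refine ⟨⟨fun hx => ?_, fun ⟨C, Γ, h⟩ => h.regularlyRecurrent⟩,
    ⟨fun hx => ?_, fun ⟨C, Γ, hN, h⟩ => h.stronglyRegularlyRecurrent hN⟩⟩
  · obtain ⟨C, Γ, -, h⟩ := exists_fundamentalClopenSystem (fun _ => True) fun V hV =>
      (hx.exists_isClopenReturnNhd_subset hdense hV).imp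
        fun C ⟨hCV, Γ, hΓ⟩ => ⟨hCV, Γ, trivial, hΓ⟩
    exact ⟨C, Γ, h⟩
  · exact exists_fundamentalClopenSystem (·.Normal) fun V hV =>
      hx.exists_isClopenReturnNhd_subset hdense hV

/-- Corollary `caracterizacion`: a point `x` with dense orbit is
(strongly) regularly recurrent iff it has a fundamental system of clopen neighborhoods
`(Cᵢ)` with `⋂ᵢ Cᵢ = {x}` whose return times are a decreasing sequence of finite-index
(normal) subgroups. -/
theorem statement6 {G X : Type*} [Group G] [Group.FG G] [MetricSpace X] [CompactSpace X]
    [MulAction G X]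
    (hc : ∀ g : G, Continuous fun y : X => g • y)
    (x : X) (hdense : Dense (Set.range fun g : G => g • x)) :
    (RegularlyRecurrent G x ↔
      ∃ (C : ℕ → Set X) (Γ : ℕ → Subgroup G), FundamentalClopenSystem G x C Γ) ∧
    (StronglyRegularlyRecurrent G x ↔
      ∃ (C : ℕ → Set X) (Γ : ℕ → Subgroup G),
        (∀ i, (Γ i).Normal) ∧ FundamentalClopenSystem G x C Γ) :=
  statement6_general hc x hdense
end

section
/- Let G be a discrete finitely generated group and let (X, G) be a minimal topological dynamical system. Then (X, G) is an almost 1-1 extension of an odometer — i.e., there exist a decreasing sequence (Γ_i)_{i≥0} of finite-index normal subgroups of G and a factor map π : X → lim_{←i}(G/Γ_i, π_i) such that some point of the odometer has exactly one π-preimage — if and only if X contains a strongly regularly recurrent point. Moreover, for such an almost 1-1 factor map π, the set of strongly regularly recurrent points of X is exactly the π-preimage of the set of points of the odometer having exactly one π-preimage. -/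
open Pointwise MeasureTheory

/-!
For a finite-index normal subgroup `Λ` of `G`, the closures of `Λ`-orbits in a minimal system are
finitely many translates `g • closure (Λ • x)` covering `X`, and they partition `X`: an inclusion
`A ⊆ g • A` between such sets is an equality because `g` has finite order modulo `Λ`. When `Λ`
contains every time at which `x` returns to `closure (Λ • x)`, this partition is the fibre partition
of a continuous equivariant map `X → G ⧸ Λ`.

A strongly regularly recurrent point `x` provides a decreasing sequence of such subgroups `Γᵢ`
whose orbit closures shrink to `x`; the maps `X → G ⧸ Γᵢ` assemble into a factor map onto the
odometer, in which `x` is the only preimage of its image. Conversely, if `z₀` is the only preimage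
of `π z₀`, the preimages of the cylinders around `π z₀` are clopen, shrink to `z₀`, and have the
normal subgroups `Γᵢ` as return times.

Finally, if `x` is strongly regularly recurrent and `π z = π x`, then along an ultrafilter that
drives `π x` to a point with a singleton fibre, both `x` and `z` converge to that single preimage.
So `x` and `z` are proximal and no equivariant map to a discrete `G ⧸ Λ` separates them, whereas the
map built from a return group of a clopen neighbourhood of `x` avoiding `z` would.
-/

open MulAction Filter Topology

lemma Set.smul_set_eq_of_subset_smul_set {G X : Type*} [Monoid G] [MulAction G X] {g : G}
    {A : Set X} {n : ℕ} (hn : 0 < n) (hgn : g ^ n • A = A) (h : A ⊆ g • A) : g • A = A := by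
  have hpow : ∀ k : ℕ, A ⊆ g ^ k • A := by
    intro k
    induction k with
    | zero => simp
    | succ k ih => exact h.trans (by rw [pow_succ', mul_smul]; exact Set.smul_set_mono ih)
  refine (Set.smul_set_mono (hpow (n - 1))).trans ?_ |>.antisymm h
  rw [smul_smul, ← pow_succ', Nat.sub_add_cancel hn, hgn]

instance QuotientGroup.discreteTopology_of_discreteTopology {G : Type*} [Group G]
    [TopologicalSpace G] [DiscreteTopology G] (Λ : Subgroup G) : DiscreteTopology (G ⧸ Λ) :=
  QuotientGroup.discreteTopology_iff.mpr (isOpen_discrete _)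

section OrbitClosure

variable {G X : Type*} [Group G] [TopologicalSpace X] [MulAction G X] {Λ : Subgroup G}

lemma closure_orbit_mono {Λ' : Subgroup G} (h : Λ ≤ Λ') (u : X) :
    closure (orbit Λ u) ⊆ closure (orbit Λ' u) :=
  closure_mono <| by rintro _ ⟨⟨γ, hγ⟩, rfl⟩; exact ⟨⟨γ, h hγ⟩, rfl⟩

lemma closure_orbit_subset_of_subset_returnTimes {u : X} {W : Set X} (hW : IsClosed W)
    (hΛ : (Λ : Set G) ⊆ ReturnTimes G u W) : closure (orbit Λ u) ⊆ W :=
  closure_minimal (by rintro _ ⟨⟨γ, hγ⟩, rfl⟩; exact hΛ hγ) hW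

lemma StronglyRegularlyRecurrent.exists_subgroup {x : X} (hx : StronglyRegularlyRecurrent G x)
    {V : Set X} (hV : IsOpen V) (hxV : x ∈ V) :
    ∃ Λ : Subgroup G, Λ.Normal ∧ Λ.FiniteIndex ∧ closure (orbit Λ x) ⊆ V ∧
      ReturnTimes G x (closure (orbit Λ x)) ⊆ Λ := by
  obtain ⟨W, hW, -, hWV, Λ, hΛn, hΛf, hΛ⟩ := hx V hV hxV
  have hA := closure_orbit_subset_of_subset_returnTimes hW.isClosed hΛ.ge
  exact ⟨Λ, hΛn, hΛf, hA.trans hWV, fun g hg => hΛ ▸ hA hg⟩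

lemma returnTimes_closure_orbit_biInf_subset {ι : Type*} {s : Finset ι} {Λ : ι → Subgroup G}
    {u : X} (h : ∀ j ∈ s, ReturnTimes G u (closure (orbit (Λ j) u)) ⊆ Λ j) :
    ReturnTimes G u (closure (orbit (⨅ j ∈ s, Λ j : Subgroup G) u)) ⊆
      ((⨅ j ∈ s, Λ j : Subgroup G) : Set G) := by
  intro g hg
  simp only [SetLike.mem_coe, Subgroup.mem_iInf]
  exact fun j hj => h j hj (closure_orbit_mono (biInf_le _ hj) u hg)

variable [ContinuousConstSMul G X] [Λ.Normal]

lemma smul_closure_orbit (g : G) (u : X) :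
    g • closure (orbit Λ u) = closure (orbit Λ (g • u)) := by
  rw [← closure_smul, smul_orbit_eq_orbit_smul]

lemma smul_closure_orbit_of_mk_eq {g h : G} (hgh : (g : G ⧸ Λ) = h) (u : X) :
    g • closure (orbit Λ u) = h • closure (orbit Λ u) := by
  obtain ⟨γ, rfl⟩ : ∃ γ : Λ, h = g * γ := ⟨⟨g⁻¹ * h, QuotientGroup.eq.1 hgh⟩, by simp⟩
  rw [mul_smul, smul_closure_orbit (γ : G), ← Subgroup.smul_def, orbit_smul]

lemma closure_orbit_subset_of_mem_s8 {u u' : X} (h : u' ∈ closure (orbit Λ u)) :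
    closure (orbit Λ u') ⊆ closure (orbit Λ u) := by
  refine closure_minimal ?_ isClosed_closure
  rintro _ ⟨γ, rfl⟩
  have : (γ : G) • u' ∈ (γ : G) • closure (orbit Λ u) := Set.smul_mem_smul_set h
  rwa [smul_closure_orbit, ← Subgroup.smul_def, orbit_smul] at this

variable [IsMinimal G X] [Λ.FiniteIndex]

lemma exists_mem_smul_closure_orbit (u z : X) : ∃ g : G, z ∈ g • closure (orbit Λ u) := by
  have : Finite (G ⧸ Λ) := Subgroup.finite_quotient_of_finiteIndex
  have hclosed : IsClosed (⋃ q : G ⧸ Λ, q.out • closure (orbit Λ u)) :=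
    isClosed_iUnion_of_finite fun q => isClosed_closure.smul _
  have horbit : orbit G u ⊆ ⋃ q : G ⧸ Λ, q.out • closure (orbit Λ u) := by
    rintro _ ⟨g, rfl⟩
    refine Set.mem_iUnion.2 ⟨g, ?_⟩
    rw [smul_closure_orbit_of_mk_eq (QuotientGroup.out_eq' (g : G ⧸ Λ))]
    exact Set.smul_mem_smul_set (subset_closure (mem_orbit_self u))
  have hz := hclosed.closure_subset_iff.2 horbit ((dense_orbit G u).closure_eq ▸ Set.mem_univ z)
  obtain ⟨q, hq⟩ := Set.mem_iUnion.1 hz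
  exact ⟨q.out, hq⟩

lemma closure_orbit_eq_of_mem {u u' : X} (h : u' ∈ closure (orbit Λ u)) :
    closure (orbit Λ u') = closure (orbit Λ u) := by
  set A := closure (orbit Λ u)
  set B := closure (orbit Λ u')
  have : Finite (G ⧸ Λ) := Subgroup.finite_quotient_of_finiteIndex
  obtain ⟨g, hg⟩ := exists_mem_smul_closure_orbit (Λ := Λ) u' u
  have hBA : B ⊆ A := closure_orbit_subset_of_mem_s8 h
  have hAgB : A ⊆ g • B := by
    rw [smul_closure_orbit] at hg ⊢
    exact closure_orbit_subset_of_mem_s8 hg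
  have hgA : g • A = A := by
    refine Set.smul_set_eq_of_subset_smul_set (orderOf_pos (g : G ⧸ Λ)) ?_
      (hAgB.trans (Set.smul_set_mono hBA))
    rw [smul_closure_orbit_of_mk_eq (h := 1) (by rw [QuotientGroup.mk_pow, pow_orderOf_eq_one,
      QuotientGroup.mk_one]), one_smul]
  have hgB : g • B = A := (hgA ▸ Set.smul_set_mono hBA).antisymm hAgB
  exact (smul_left_cancel_iff g).1 (hgB.trans hgA.symm)

lemma smul_closure_orbit_eq_of_mem {g : G} {u w : X} (hw : w ∈ g • closure (orbit Λ u)) :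
    g • closure (orbit Λ u) = closure (orbit Λ w) := by
  rw [smul_closure_orbit] at hw ⊢
  exact (closure_orbit_eq_of_mem hw).symm

end OrbitClosure

section CosetMap

variable {G X : Type*} [Group G] [TopologicalSpace G] [TopologicalSpace X]
  [MulAction G X] [ContinuousConstSMul G X] [IsMinimal G X] {Λ : Subgroup G} [Λ.Normal]
  [Λ.FiniteIndex]

theorem exists_equivariant_map_quotient (x : X)
    (hΛ : ReturnTimes G x (closure (orbit Λ x)) ⊆ Λ) :
    ∃ f : X → G ⧸ Λ, Continuous f ∧ (∀ (g : G) (w : X), f (g • w) = g • f w) ∧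
      ∀ (g : G) (w : X), f w = g ↔ w ∈ g • closure (orbit Λ x) := by
  set A := closure (orbit Λ x)
  have : Finite (G ⧸ Λ) := Subgroup.finite_quotient_of_finiteIndex
  choose c hc using fun w => exists_mem_smul_closure_orbit (Λ := Λ) x w
  have hmk : ∀ (g : G) (w : X), w ∈ g • A → (c w : G ⧸ Λ) = g := by
    intro g w hw
    have hA : (g⁻¹ * c w) • A = A := by
      rw [mul_smul, smul_closure_orbit_eq_of_mem (hc w), ← smul_closure_orbit_eq_of_mem hw,
        inv_smul_smul]
    have hret : g⁻¹ * c w ∈ ReturnTimes G x A := by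
      change (g⁻¹ * c w) • x ∈ A
      rw [← hA]
      exact Set.smul_mem_smul_set (subset_closure (mem_orbit_self x))
    exact (QuotientGroup.eq.2 (hΛ hret)).symm
  have hfiber : ∀ (g : G) (w : X), (c w : G ⧸ Λ) = g ↔ w ∈ g • A := fun g w =>
    ⟨fun h => smul_closure_orbit_of_mk_eq h x ▸ hc w, hmk g w⟩
  refine ⟨fun w => c w, continuous_iff_isClosed.2 fun s _ => ?_, fun g w => ?_, hfiber⟩
  · rw [← Set.biUnion_preimage_singleton]
    refine s.toFinite.isClosed_biUnion fun q _ => ?_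
    obtain ⟨g, rfl⟩ := QuotientGroup.mk_surjective q
    rw [show (fun w => (c w : G ⧸ Λ)) ⁻¹' {(g : G ⧸ Λ)} = g • A from Set.ext (hfiber g)]
    exact isClosed_closure.smul g
  · exact hmk (g * c w) (g • w) (by rw [mul_smul]; exact Set.smul_mem_smul_set (hc w))

end CosetMap

section Proximal

variable {G X : Type*} [Group G] [TopologicalSpace X] [MulAction G X] {ι : Type*}

lemma tendsto_smul_of_unique_preimage [CompactSpace X] {Y : Type*} [TopologicalSpace Y]
    [T2Space Y] [MulAction G Y] {π : X → Y} (hπc : Continuous π)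
    (hπe : ∀ (g : G) (x : X), π (g • x) = g • π x) {y : Y} {z₀ : X}
    (hz₀ : ∀ z, π z = y → z = z₀) {𝒰 : Ultrafilter ι} {u : ι → G} {x : X}
    (hu : Tendsto (fun i => u i • π x) 𝒰 (𝓝 y)) : Tendsto (fun i => u i • x) 𝒰 (𝓝 z₀) := by
  obtain ⟨p, -, hp⟩ := isCompact_univ.ultrafilter_le_nhds (𝒰.map fun i => u i • x) (by simp)
  have hπp : Tendsto (fun i => u i • π x) 𝒰 (𝓝 (π p)) := by
    simpa only [Function.comp_def, hπe] using (hπc.tendsto p).comp hp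
  rwa [← hz₀ p (tendsto_nhds_unique hπp hu)]

lemma eq_of_tendsto_smul {D : Type*} [TopologicalSpace D] [DiscreteTopology D] [MulAction G D]
    {f : X → D} (hfc : Continuous f) (hfe : ∀ (g : G) (x : X), f (g • x) = g • f x)
    {l : Filter ι} [l.NeBot] {u : ι → G} {x z p : X} (hx : Tendsto (fun i => u i • x) l (𝓝 p))
    (hz : Tendsto (fun i => u i • z) l (𝓝 p)) : f x = f z := by
  have hfx := tendsto_pure.1 (nhds_discrete D ▸ (hfc.tendsto p).comp hx)
  have hfz := tendsto_pure.1 (nhds_discrete D ▸ (hfc.tendsto p).comp hz)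
  obtain ⟨i, hix, hiz⟩ := (hfx.and hfz).exists
  simp only [Function.comp_apply, hfe] at hix hiz
  exact (smul_left_cancel_iff (u i)).1 (hix.trans hiz.symm)

end Proximal

namespace Subodometer

variable {G : Type*} [Group G] {Γ : ℕ → Subgroup G}

lemma coord_eq_of_succ {w w' : Subodometer Γ} {n : ℕ} (h : w.1 (n + 1) = w'.1 (n + 1)) :
    w.1 n = w'.1 n := by
  obtain ⟨g, hg⟩ := QuotientGroup.mk_surjective (w.1 (n + 1))
  rw [← w.2 n g hg, w'.2 n g (hg.trans h)]

lemma coord_eq_of_le {w w' : Subodometer Γ} {m n : ℕ} (hmn : m ≤ n)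
    (h : w.1 n = w'.1 n) : w.1 m = w'.1 m := by
  induction n, hmn using Nat.le_induction with
  | base => exact h
  | succ n _ ih => exact ih (coord_eq_of_succ h)

lemma smul_coord_eq_iff {n : ℕ} [(Γ n).Normal] (g : G) (w : Subodometer Γ) :
    (g • w).1 n = w.1 n ↔ g ∈ Γ n := by
  obtain ⟨a, ha⟩ := QuotientGroup.mk_surjective (w.1 n)
  change g • w.1 n = w.1 n ↔ _
  rw [← ha]
  change ((g * a : G) : G ⧸ Γ n) = a ↔ _
  rw [QuotientGroup.eq, mul_inv_rev, mul_assoc, Subgroup.Normal.mem_comm_iff inferInstance,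
    mul_inv_cancel_right, inv_mem_iff]

variable [TopologicalSpace G]

instance [DiscreteTopology G] : T2Space (Subodometer Γ) :=
  inferInstanceAs (T2Space {x // Compat Γ x})

lemma continuous_coord (i : ℕ) : Continuous fun w : Subodometer Γ => w.1 i :=
  (continuous_apply i).comp continuous_subtype_val

lemma exists_tendsto_smul (v y : Subodometer Γ) :
    ∃ u : ℕ → G, Tendsto (fun n => u n • v) atTop (𝓝 y) := by
  choose u hu using fun n => MulAction.exists_smul_eq G (v.1 n) (y.1 n)
  refine ⟨u, tendsto_subtype_rng.2 (tendsto_pi_nhds.2 fun i => tendsto_nhds_of_eventually_eq ?_)⟩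
  filter_upwards [eventually_ge_atTop i] with n hn
  exact coord_eq_of_le hn (hu n)

end Subodometer

section AlmostOneOne

variable {G X : Type*} [Group G] [TopologicalSpace G] [DiscreteTopology G] [TopologicalSpace X]
  [CompactSpace X] [MulAction G X] {Γ : ℕ → Subgroup G}

theorem stronglyRegularlyRecurrent_of_unique_preimage (hnorm : ∀ i, (Γ i).Normal)
    (hfin : ∀ i, (Γ i).FiniteIndex) {π : X → Subodometer Γ} (hπc : Continuous π)
    (hπe : ∀ (g : G) (x : X), π (g • x) = g • π x) {z₀ : X} (hz₀ : ∀ z, π z = π z₀ → z = z₀) :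
    StronglyRegularlyRecurrent G z₀ := by
  intro V hV hz₀V
  set D : ℕ → Set X := fun n => π ⁻¹' {w | w.1 n = (π z₀).1 n}
  have hD : ∀ n, IsClopen (D n) := fun n =>
    (isClopen_discrete {(π z₀).1 n}).preimage ((Subodometer.continuous_coord n).comp hπc)
  have hDanti : Antitone D :=
    antitone_nat_of_succ_le fun n _ hz => Subodometer.coord_eq_of_succ hz
  obtain ⟨n, hn⟩ := exists_subset_nhds_of_isCompact' hDanti.directed_ge
    (fun n => (hD n).isClosed.isCompact) (fun n => (hD n).isClosed) fun z hz => by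
      rw [hz₀ z (Subtype.ext (funext (Set.mem_iInter.1 hz)))]
      exact hV.mem_nhds hz₀V
  refine ⟨D n, hD n, rfl, hn, Γ n, hnorm n, hfin n, Set.ext fun g => ?_⟩
  have := hnorm n
  change (π (g • z₀)).1 n = (π z₀).1 n ↔ g ∈ Γ n
  rw [hπe]
  exact Subodometer.smul_coord_eq_iff g (π z₀)

theorem eq_of_stronglyRegularlyRecurrent [T1Space X] [ContinuousConstSMul G X] [IsMinimal G X]
    {π : X → Subodometer Γ} (hπc : Continuous π) (hπe : ∀ (g : G) (x : X), π (g • x) = g • π x)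
    {y : Subodometer Γ} {z₀ : X} (hz₀ : ∀ z, π z = y → z = z₀) {x z : X}
    (hx : StronglyRegularlyRecurrent G x) (hz : π z = π x) : z = x := by
  by_contra hzx
  obtain ⟨Λ, hΛn, hΛf, hAz, hΛ⟩ := hx.exists_subgroup isOpen_compl_singleton (Ne.symm hzx)
  obtain ⟨f, hfc, hfe, hf⟩ := exists_equivariant_map_quotient x hΛ
  obtain ⟨u, hu⟩ := Subodometer.exists_tendsto_smul (π x) y
  have hu' := hu.mono_left (Ultrafilter.of_le atTop)
  have hfxz : f x = f z := eq_of_tendsto_smul hfc hfe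
    (tendsto_smul_of_unique_preimage hπc hπe hz₀ hu')
    (tendsto_smul_of_unique_preimage hπc hπe hz₀ (hz ▸ hu'))
  have hfx : f x = (1 : G) := (hf 1 x).2 (by rw [one_smul]; exact subset_closure (mem_orbit_self x))
  have hzA : z ∈ closure (orbit Λ x) := by simpa only [one_smul] using (hf 1 z).1 (hfxz ▸ hfx)
  exact hAz hzA rfl

end AlmostOneOne

theorem StronglyRegularlyRecurrent.exists_antitone_subgroups {G X : Type*} [Group G]
    [MetricSpace X] [MulAction G X] {x : X}
    (hx : StronglyRegularlyRecurrent G x) :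
    ∃ Γ : ℕ → Subgroup G, (∀ i, (Γ i).Normal) ∧ (∀ i, (Γ i).FiniteIndex) ∧
      (∀ i, Γ (i + 1) ≤ Γ i) ∧ (∀ i, ReturnTimes G x (closure (orbit (Γ i) x)) ⊆ Γ i) ∧
      ∀ z, (∀ i, z ∈ closure (orbit (Γ i) x)) → z = x := by
  choose Λ hΛn hΛf hΛball hΛret using fun i : ℕ =>
    hx.exists_subgroup Metric.isOpen_ball (Metric.mem_ball_self (Nat.one_div_pos_of_nat (n := i)))
  refine ⟨fun i => ⨅ j ∈ Finset.range (i + 1), Λ j,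
    fun i => Subgroup.normal_iInf_normal fun j => Subgroup.normal_iInf_normal fun _ => hΛn j,
    fun i => Subgroup.finiteIndex_iInf' _ fun j _ => hΛf j,
    fun i => biInf_mono fun j hj => Finset.range_subset_range.2 (Nat.le_succ _) hj,
    fun i => returnTimes_closure_orbit_biInf_subset fun j _ => hΛret j, fun z hz => ?_⟩
  refine eq_of_forall_dist_le fun ε hε => ?_
  obtain ⟨n, hn⟩ := exists_nat_one_div_lt hε
  have hzn : z ∈ Metric.ball x (1 / (n + 1)) :=
    hΛball n (closure_orbit_mono (biInf_le _ (Finset.self_mem_range_succ n)) x (hz n))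
  exact (Metric.mem_ball.1 hzn).le.trans hn.le

section Construction

variable {G X : Type*} [Group G] [TopologicalSpace G] [DiscreteTopology G] [TopologicalSpace X]
  [CompactSpace X] [MulAction G X] [ContinuousConstSMul G X] [IsMinimal G X]

/-- The `i`-th coordinate of `π w` is the coset `g Γᵢ` with `w ∈ g • closure (Γᵢ • x)`. -/
theorem exists_factorMap_subodometer {Γ : ℕ → Subgroup G} (hnorm : ∀ i, (Γ i).Normal)
    (hfin : ∀ i, (Γ i).FiniteIndex) (hdec : ∀ i, Γ (i + 1) ≤ Γ i) {x : X}
    (hret : ∀ i, ReturnTimes G x (closure (orbit (Γ i) x)) ⊆ Γ i)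
    (hx : ∀ z, (∀ i, z ∈ closure (orbit (Γ i) x)) → z = x) :
    ∃ π : X → Subodometer Γ, IsFactorMap G π ∧ ∀ z, π z = π x → z = x := by
  choose f hfc hfe hf using fun i => by
    have := hnorm i
    have := hfin i
    exact exists_equivariant_map_quotient x (hret i)
  have hcompat : ∀ w, Compat Γ fun i => f i w := fun w i g hg =>
    ((hf i g w).2 (Set.smul_set_mono (closure_orbit_mono (hdec i) x)
      ((hf (i + 1) g w).1 hg.symm))).symm
  set π : X → Subodometer Γ := fun w => ⟨fun i => f i w, hcompat w⟩
  have hπc : Continuous π := (continuous_pi hfc).subtype_mk _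
  have hπe : ∀ (g : G) (w : X), π (g • w) = g • π w := fun g w =>
    Subtype.ext (funext fun i => hfe i g w)
  refine ⟨π, ⟨hπc, fun y => ?_, hπe⟩, fun z hz => hx z fun i => ?_⟩
  · obtain ⟨u, hu⟩ := Subodometer.exists_tendsto_smul (π x) y
    exact (isCompact_range hπc).isClosed.closure_subset
      (mem_closure_of_tendsto hu (Eventually.of_forall fun n => ⟨u n • x, hπe _ _⟩))
  · have hfx : f i x = ((1 : G) : G ⧸ Γ i) :=
      (hf i 1 x).2 (by rw [one_smul]; exact subset_closure (mem_orbit_self x))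
    simpa only [one_smul] using (hf i 1 z).1 ((congrFun (congrArg Subtype.val hz) i).trans hfx)

end Construction

theorem statement8_general {G X : Type*} [Group G] [TopologicalSpace G]
    [DiscreteTopology G] [MetricSpace X] [CompactSpace X] [MulAction G X]
    (hc : ∀ g : G, Continuous fun x : X => g • x)
    (hmin : ∀ x : X, Dense (Set.range fun g : G => g • x)) :
    ((∃ Γ : ℕ → Subgroup G, (∀ i, (Γ i).Normal) ∧ (∀ i, (Γ i).FiniteIndex) ∧
        (∀ i, Γ (i + 1) ≤ Γ i) ∧
        ∃ π : X → Subodometer Γ, IsFactorMap G π ∧ ∃ y : Subodometer Γ, ∃! z : X, π z = y)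
      ↔ ∃ x : X, StronglyRegularlyRecurrent G x) ∧
    (∀ Γ : ℕ → Subgroup G, (∀ i, (Γ i).Normal) → (∀ i, (Γ i).FiniteIndex) →
      (∀ i, Γ (i + 1) ≤ Γ i) →
      ∀ π : X → Subodometer Γ, IsFactorMap G π → (∃ y : Subodometer Γ, ∃! z : X, π z = y) →
        {x : X | StronglyRegularlyRecurrent G x}
          = π ⁻¹' {y : Subodometer Γ | ∃! z : X, π z = y}) := by
  have : ContinuousConstSMul G X := ⟨hc⟩
  have : IsMinimal G X := ⟨hmin⟩
  refine ⟨⟨?_, ?_⟩, ?_⟩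
  · rintro ⟨Γ, hnorm, hfin, -, π, ⟨hπc, -, hπe⟩, y, z₀, rfl, hz₀⟩
    exact ⟨z₀, stronglyRegularlyRecurrent_of_unique_preimage hnorm hfin hπc hπe hz₀⟩
  · rintro ⟨x, hx⟩
    obtain ⟨Γ, hnorm, hfin, hdec, hret, hΓx⟩ := hx.exists_antitone_subgroups
    obtain ⟨π, hπ, hπx⟩ := exists_factorMap_subodometer hnorm hfin hdec hret hΓx
    exact ⟨Γ, hnorm, hfin, hdec, π, hπ, π x, x, rfl, hπx⟩
  · rintro Γ hnorm hfin - π ⟨hπc, -, hπe⟩ ⟨y, z₀, -, hz₀⟩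
    ext x
    refine ⟨fun hx => ⟨x, rfl, fun z hz => eq_of_stronglyRegularlyRecurrent hπc hπe hz₀ hx hz⟩,
      fun ⟨_, _, hunique⟩ => ?_⟩
    refine stronglyRegularlyRecurrent_of_unique_preimage hnorm hfin hπc hπe fun z hz => ?_
    exact (hunique z hz).trans (hunique x rfl).symm

/-- Theorem `almost`, odometer case: a minimal system `(X, G)` is an
almost 1-1 extension of an odometer iff it has a strongly regularly recurrent point; and
for any such almost 1-1 factor map, the strongly regularly recurrent points are exactly
the preimages of the points with a single preimage. -/
theorem statement8 {G X : Type*} [Group G] [Group.FG G] [TopologicalSpace G]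
    [DiscreteTopology G] [MetricSpace X] [CompactSpace X] [MulAction G X]
    (hc : ∀ g : G, Continuous fun x : X => g • x)
    (hmin : ∀ x : X, Dense (Set.range fun g : G => g • x)) :
    ((∃ Γ : ℕ → Subgroup G, (∀ i, (Γ i).Normal) ∧ (∀ i, (Γ i).FiniteIndex) ∧
        (∀ i, Γ (i + 1) ≤ Γ i) ∧
        ∃ π : X → Subodometer Γ, IsFactorMap G π ∧ ∃ y : Subodometer Γ, ∃! z : X, π z = y)
      ↔ ∃ x : X, StronglyRegularlyRecurrent G x) ∧
    (∀ Γ : ℕ → Subgroup G, (∀ i, (Γ i).Normal) → (∀ i, (Γ i).FiniteIndex) →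
      (∀ i, Γ (i + 1) ≤ Γ i) →
      ∀ π : X → Subodometer Γ, IsFactorMap G π → (∃ y : Subodometer Γ, ∃! z : X, π z = y) →
        {x : X | StronglyRegularlyRecurrent G x}
          = π ⁻¹' {y : Subodometer Γ | ∃! z : X, π z = y}) :=
  statement8_general hc hmin
end
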